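/- arXiv:2511.21110 — 2 statements merged into one kernel-verified Lean document; each statement's English description precedes it below -/
import Mathlib

section
/- Let (a_n)_{n≥1} be a nonincreasing sequence of positive real numbers with ∑_{n=1}^∞ a_n = 1. Then the set of subsums S = { ∑_{n∈A} a_n : A ⊆ {1,2,3,…} } is a convex subset of ℝ if and only if a_n ≤ 1 − ∑_{k=1}^n a_k for all n ≥ 1; moreover, when this condition holds, S = [0,1]. -/
/-!
Every subsum lies in `[0, 1]`. If each term is at most the tail that follows it, the greedy
algorithm (take `a n` whenever it does not overshoot the target `x`) keeps the remaining gap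
`x - (partial greedy sum)` below the current tail, which tends to `0`, so every `x ∈ [0, 1]`
is a subsum. Conversely, if `a N` exceeds the tail `r` after it, no subsum lies in `(r, a N)`:
a subset containing some index `k ≤ N` already sums to at least `a k ≥ a N`, and any other
subset sums to at most `r`. Since `0` and `1` are subsums, `S` is then not convex.
-/

open Finset Filter Topology

def subsums {ι : Type*} (a : ι → ℝ) : Set ℝ :=
  {x | ∃ A : Set ι, HasSum (A.indicator a) x}

section Subsums

variable {ι : Type*} {a : ι → ℝ} {s : ℝ}

theorem zero_mem_subsums (a : ι → ℝ) : 0 ∈ subsums a :=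
  ⟨∅, by simp [hasSum_zero]⟩

theorem mem_subsums_of_hasSum (h : HasSum a s) : s ∈ subsums a :=
  ⟨Set.univ, by simpa using h⟩

theorem subsums_subset_Icc (ha : ∀ i, 0 ≤ a i) (h : HasSum a s) : subsums a ⊆ Set.Icc 0 s := by
  rintro x ⟨A, hA⟩
  exact ⟨hasSum_le (Set.indicator_nonneg fun i _ => ha i) hasSum_zero hA,
    hasSum_le (Set.indicator_le_self' fun i _ => ha i) hA h⟩

theorem hasSum_indicator_add_sum_le (ha : ∀ i, 0 ≤ a i) (h : HasSum a s) {A : Set ι} {x : ℝ}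
    (hA : HasSum (A.indicator a) x) {F : Finset ι} (hF : Disjoint A F) :
    x + ∑ i ∈ F, a i ≤ s := by
  have hFsum : HasSum ((F : Set ι).indicator a) (∑ i ∈ F, a i) :=
    hasSum_subtype_iff_indicator.mp (F.hasSum a)
  have hunion : HasSum ((A ∪ F).indicator a) (x + ∑ i ∈ F, a i) := by
    rw [Set.indicator_union_of_disjoint hF]
    exact hA.add hFsum
  exact hasSum_le (Set.indicator_le_self' fun i _ => ha i) hunion h

end Subsums

section Greedy

variable {a : ℕ → ℝ} {s x : ℝ}

open Classical in
noncomputable def greedySum (a : ℕ → ℝ) (x : ℝ) : ℕ → ℝ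
  | 0 => 0
  | n + 1 => greedySum a x n + if greedySum a x n + a n ≤ x then a n else 0

def greedySet (a : ℕ → ℝ) (x : ℝ) : Set ℕ :=
  {n | greedySum a x n + a n ≤ x}

theorem sum_range_indicator_greedySet (n : ℕ) :
    ∑ k ∈ range n, (greedySet a x).indicator a k = greedySum a x n := by
  induction n with
  | zero => simp [greedySum]
  | succ n ih =>
    rw [sum_range_succ, ih, greedySum]
    by_cases h : greedySum a x n + a n ≤ x
    · simp [Set.indicator_of_mem (show n ∈ greedySet a x from h), h]
    · simp [Set.indicator_of_notMem (show n ∉ greedySet a x from h), h]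

theorem greedySum_le (hx : 0 ≤ x) (n : ℕ) : greedySum a x n ≤ x := by
  induction n with
  | zero => exact hx
  | succ n ih =>
    rw [greedySum]
    split_ifs with h
    · exact h
    · simpa using ih

theorem sub_greedySum_le_tail (hcond : ∀ n, a n ≤ s - ∑ k ∈ range (n + 1), a k) (hxs : x ≤ s)
    (n : ℕ) : x - greedySum a x n ≤ s - ∑ k ∈ range n, a k := by
  induction n with
  | zero => simpa [greedySum] using hxs
  | succ n ih =>
    rw [greedySum, sum_range_succ]
    split_ifs with h
    · linarith
    · have := hcond n
      rw [sum_range_succ] at this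
      linarith

theorem hasSum_indicator_greedySet (h : HasSum a s)
    (hcond : ∀ n, a n ≤ s - ∑ k ∈ range (n + 1), a k) (hx : x ∈ Set.Icc 0 s) :
    HasSum ((greedySet a x).indicator a) x := by
  rw [(h.summable.indicator _).hasSum_iff_tendsto_nat]
  simp only [sum_range_indicator_greedySet]
  have htail : Tendsto (fun n => x - (s - ∑ k ∈ range n, a k)) atTop (𝓝 x) := by
    simpa using (tendsto_const_nhds (x := x)).sub
      ((tendsto_const_nhds (x := s)).sub h.tendsto_sum_nat)
  refine tendsto_of_tendsto_of_tendsto_of_le_of_le htail tendsto_const_nhds (fun n => ?_)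
    (greedySum_le hx.1)
  linarith [sub_greedySum_le_tail hcond hx.2 n]

theorem Icc_subset_subsums_of_le_tail (h : HasSum a s)
    (hcond : ∀ n, a n ≤ s - ∑ k ∈ range (n + 1), a k) : Set.Icc 0 s ⊆ subsums a :=
  fun x hx => ⟨greedySet a x, hasSum_indicator_greedySet h hcond hx⟩

end Greedy

section Gap

variable {a : ℕ → ℝ} {s : ℝ}

theorem disjoint_subsums_Ioo_tail (hmono : Antitone a) (ha : ∀ n, 0 ≤ a n) (h : HasSum a s)
    (N : ℕ) : Disjoint (subsums a) (Set.Ioo (s - ∑ k ∈ range (N + 1), a k) (a N)) := by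
  refine Set.disjoint_left.mpr ?_
  rintro x ⟨A, hA⟩ ⟨hrx, hxa⟩
  by_cases hmeets : ∃ k ∈ A, k ≤ N
  · obtain ⟨k, hkA, hkN⟩ := hmeets
    have hak : a k ≤ x := by
      simpa [Set.indicator_of_mem hkA] using
        le_hasSum hA k fun j _ => Set.indicator_nonneg (fun i _ => ha i) j
    linarith [hmono hkN]
  · have hdisj : Disjoint A (range (N + 1) : Set ℕ) := by
      refine Set.disjoint_left.mpr fun k hkA hkN => hmeets ⟨k, hkA, ?_⟩
      simpa [Nat.lt_succ_iff] using hkN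
    linarith [hasSum_indicator_add_sum_le ha h hA hdisj]

theorem le_tail_of_Icc_subset_subsums (hmono : Antitone a) (ha : ∀ n, 0 ≤ a n) (h : HasSum a s)
    (hS : Set.Icc 0 s ⊆ subsums a) (N : ℕ) : a N ≤ s - ∑ k ∈ range (N + 1), a k := by
  have hIoo : Set.Ioo (s - ∑ k ∈ range (N + 1), a k) (a N) ⊆ subsums a := by
    have htail : ∑ k ∈ range (N + 1), a k ≤ s := sum_le_hasSum _ (fun i _ => ha i) h
    have haN : a N ≤ s := le_hasSum h N fun j _ => ha j
    exact fun y hy => hS ⟨by linarith [hy.1], by linarith [hy.2]⟩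
  have hempty := (disjoint_subsums_Ioo_tail hmono ha h N).eq_bot_of_ge hIoo
  exact not_lt.mp (Set.Ioo_eq_empty_iff.mp hempty)

end Gap

/-- For a nonincreasing positive sequence `(a_n)` summing to `1`, the set of
subsums `S = {∑_{n ∈ A} a_n : A ⊆ ℕ}` is convex iff
`a_n ≤ 1 − ∑_{k=1}^n a_k` for all `n`; moreover when this condition holds,
`S = [0,1]`. (Sequences are 0-indexed.) -/
theorem stmt4 (a : ℕ → ℝ) (hpos : ∀ n, 0 < a n) (hmono : Antitone a)
    (hsummable : Summable a) (hsum : (∑' n, a n) = 1) :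
    (Convex ℝ {x : ℝ | ∃ A : Set ℕ, HasSum (A.indicator a) x} ↔
      (∀ n, a n ≤ 1 - ∑ k ∈ Finset.range (n + 1), a k)) ∧
    ((∀ n, a n ≤ 1 - ∑ k ∈ Finset.range (n + 1), a k) →
      {x : ℝ | ∃ A : Set ℕ, HasSum (A.indicator a) x} = Set.Icc 0 1) := by
  change (Convex ℝ (subsums a) ↔ _) ∧ (_ → subsums a = _)
  have ha : HasSum a 1 := hsum ▸ hsummable.hasSum
  have hnonneg : ∀ n, 0 ≤ a n := fun n => (hpos n).le
  have hS : (∀ n, a n ≤ 1 - ∑ k ∈ range (n + 1), a k) → subsums a = Set.Icc 0 1 := fun hcond =>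
    (subsums_subset_Icc hnonneg ha).antisymm (Icc_subset_subsums_of_le_tail ha hcond)
  refine ⟨⟨fun hconv => le_tail_of_Icc_subset_subsums hmono hnonneg ha ?_,
    fun hcond => hS hcond ▸ convex_Icc 0 1⟩, hS⟩
  exact hconv.ordConnected.out (zero_mem_subsums a) (mem_subsums_of_hasSum ha)
end

section
/- Let a be an extreme point of K. Then there exists a sequence of integers (k_n)_{n≥1} with k_n ≥ 2 for all n such that a is the sequence obtained by concatenating, for n = 1, 2, 3, …, a block of k_n − 1 consecutive entries each equal to 1/(k_1 k_2 ⋯ k_n). -/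
/-- `K` is the set of nonincreasing positive summable sequences with sum at
most `1` satisfying `a_n ≤ ∑_{k>n} a_k` for all `n` (0-indexed). -/
def K : Set (ℕ → ℝ) :=
  {a | (∀ n, 0 < a n) ∧ Antitone a ∧ Summable a ∧ (∑' n, a n) ≤ 1 ∧
    ∀ n, a n ≤ ∑' i, a (n + 1 + i)}

/-- `x` is an extreme point of `S`: `x ∈ S` and whenever
`x = λy + (1−λ)z` with `y, z ∈ S`, `0 < λ < 1`, one has `y = z = x`. -/
def IsExtremePt (S : Set (ℕ → ℝ)) (x : ℕ → ℝ) : Prop :=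
  x ∈ S ∧ ∀ y ∈ S, ∀ z ∈ S, ∀ lam : ℝ, 0 < lam → lam < 1 →
    x = (fun n => lam * y n + (1 - lam) * z n) → y = x ∧ z = x

/-! If some index `n` of `a ∈ K` has both `a (n + 1) < a n` and `a n < ∑_{k>n} a_k`, then
lowering the maximal constant block of `a` ending at `n` by a small `ε` and adding `η • a` after
`n`, with `η` chosen so that no mass is created, gives a direction `v` with `a ± v ∈ K`. So at an
extreme point every index either continues a constant block or ends one with
`a n = ∑_{k>n} a_k`; scaling shows moreover `∑ a = 1`. A block of `k - 1` entries `c` ending that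
way has tail sum `k c` before it and `c` after it, so the tail sum is divided by `k` across each
block, starting from `1`, which produces the values `1 / (k_0 ⋯ k_m)`. -/

noncomputable def tailSum (a : ℕ → ℝ) (n : ℕ) : ℝ := ∑' i, a (n + i)

section tailSum

variable {a : ℕ → ℝ}

lemma Summable.comp_nat_add_left (h : Summable a) (n : ℕ) : Summable fun i => a (n + i) := by
  simpa only [Nat.add_comm n] using (summable_nat_add_iff n).2 h

lemma tailSum_zero : tailSum a 0 = ∑' i, a i := by
  simp only [tailSum, Nat.zero_add]

lemma tailSum_neg (n : ℕ) : tailSum (-a) n = -tailSum a n :=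
  tsum_neg

lemma tailSum_add {b : ℕ → ℝ} (ha : Summable a) (hb : Summable b) (n : ℕ) :
    tailSum (a + b) n = tailSum a n + tailSum b n :=
  (ha.comp_nat_add_left n).tsum_add (hb.comp_nat_add_left n)

lemma tailSum_const_mul (c : ℝ) (n : ℕ) : tailSum (fun i => c * a i) n = c * tailSum a n :=
  tsum_mul_left

lemma tailSum_eq_sum_Ico_add (h : Summable a) {m N : ℕ} (hmN : m ≤ N) :
    tailSum a m = ∑ j ∈ Finset.Ico m N, a j + tailSum a N := by
  rw [Finset.sum_Ico_eq_sum_range, tailSum, ← (h.comp_nat_add_left m).sum_add_tsum_nat_add (N - m)]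
  congr 1
  exact tsum_congr fun _ => by congr 1; omega

lemma tailSum_eq_add_tailSum_succ (h : Summable a) (n : ℕ) :
    tailSum a n = a n + tailSum a (n + 1) := by
  simpa using tailSum_eq_sum_Ico_add h n.le_succ

lemma tailSum_pos (hpos : ∀ n, 0 < a n) (h : Summable a) (n : ℕ) : 0 < tailSum a n :=
  (h.comp_nat_add_left n).tsum_pos (fun _ => (hpos _).le) 0 (hpos _)

lemma tailSum_le_tailSum_of_le (hpos : ∀ n, 0 < a n) (h : Summable a) {m N : ℕ} (hmN : m ≤ N) :
    tailSum a N ≤ tailSum a m := by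
  rw [tailSum_eq_sum_Ico_add h hmN]
  exact le_add_of_nonneg_left (Finset.sum_nonneg fun j _ => (hpos j).le)

end tailSum

structure IsPerturbation (a v : ℕ → ℝ) : Prop where
  summable : Summable v
  abs_lt : ∀ n, |v n| < a n
  abs_sub_succ_le : ∀ n, |v n - v (n + 1)| ≤ a n - a (n + 1)
  abs_tsum_le : |∑' n, v n| ≤ 1 - ∑' n, a n
  abs_tailSum_sub_le : ∀ n, |tailSum v (n + 1) - v n| ≤ tailSum a (n + 1) - a n

namespace IsPerturbation

variable {a v : ℕ → ℝ}

lemma neg (hv : IsPerturbation a v) : IsPerturbation a (-v) where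
  summable := hv.summable.neg
  abs_lt n := by simpa using hv.abs_lt n
  abs_sub_succ_le n := by simpa [abs_sub_comm, neg_add_eq_sub] using hv.abs_sub_succ_le n
  abs_tsum_le := by simpa [tsum_neg] using hv.abs_tsum_le
  abs_tailSum_sub_le n := by
    simpa [tailSum_neg, abs_sub_comm, neg_add_eq_sub] using hv.abs_tailSum_sub_le n

lemma add_mem_K (ha : Summable a) (hv : IsPerturbation a v) : a + v ∈ K := by
  refine ⟨fun n => ?_, antitone_nat_of_succ_le fun n => ?_, ha.add hv.summable, ?_, fun n => ?_⟩
  · have := neg_abs_le (v n); simp only [Pi.add_apply]; linarith [hv.abs_lt n]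
  · have := neg_abs_le (v n - v (n + 1)); simp only [Pi.add_apply]
    linarith [hv.abs_sub_succ_le n]
  · have := le_abs_self (∑' n, v n)
    rw [show ∑' n, (a + v) n = _ from ha.tsum_add hv.summable]
    linarith [hv.abs_tsum_le]
  · have := neg_abs_le (tailSum v (n + 1) - v n)
    show (a + v) n ≤ tailSum (a + v) (n + 1)
    rw [tailSum_add ha hv.summable, Pi.add_apply]
    linarith [hv.abs_tailSum_sub_le n]

end IsPerturbation

lemma IsExtremePt.eq_zero_of_add_mem_of_sub_mem {S : Set (ℕ → ℝ)} {a v : ℕ → ℝ}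
    (hext : IsExtremePt S a) (hadd : a + v ∈ S) (hsub : a - v ∈ S) : v = 0 := by
  have h := (hext.2 _ hadd _ hsub (1 / 2) (by norm_num) (by norm_num)
    (by funext n; simp only [Pi.add_apply, Pi.sub_apply]; ring)).1
  simpa using h

lemma IsExtremePt.eq_zero_of_isPerturbation {a v : ℕ → ℝ} (hext : IsExtremePt K a)
    (hv : IsPerturbation a v) : v = 0 := by
  have ha : Summable a := hext.1.2.2.1
  exact hext.eq_zero_of_add_mem_of_sub_mem (hv.add_mem_K ha) (by
    simpa only [sub_eq_add_neg] using hv.neg.add_mem_K ha)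

lemma IsExtremePt.tsum_eq_one {a : ℕ → ℝ} (hext : IsExtremePt K a) : ∑' n, a n = 1 := by
  obtain ⟨hpos, hanti, hsum, hle, htail⟩ := hext.1
  replace htail : ∀ n, a n ≤ tailSum a (n + 1) := htail
  set S := ∑' n, a n
  have hS : 0 < S := hsum.tsum_pos (fun i => (hpos i).le) 0 (hpos 0)
  have hs : 0 ≤ 1 - S := sub_nonneg.2 hle
  have hs1 : 1 - S < 1 := by linarith
  have hv : IsPerturbation a fun n => (1 - S) * a n :=
    { summable := hsum.mul_left _
      abs_lt := fun n => by
        rw [abs_of_nonneg (mul_nonneg hs (hpos n).le)]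
        exact mul_lt_of_lt_one_left (hpos n) hs1
      abs_sub_succ_le := fun n => by
        rw [← mul_sub, abs_of_nonneg (mul_nonneg hs (sub_nonneg.2 (hanti n.le_succ)))]
        exact mul_le_of_le_one_left (sub_nonneg.2 (hanti n.le_succ)) hs1.le
      abs_tsum_le := by
        rw [tsum_mul_left, abs_of_nonneg (mul_nonneg hs hS.le)]
        exact mul_le_of_le_one_right hs hle
      abs_tailSum_sub_le := fun n => by
        rw [tailSum_const_mul, ← mul_sub, abs_of_nonneg (mul_nonneg hs (sub_nonneg.2 (htail n)))]
        exact mul_le_of_le_one_left (sub_nonneg.2 (htail n)) hs1.le }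
  have h0 := congr_fun (hext.eq_zero_of_isPerturbation hv) 0
  simp only [Pi.zero_apply, mul_eq_zero, (hpos 0).ne', or_false] at h0
  linarith

lemma Antitone.exists_block_start {a : ℕ → ℝ} (ha : Antitone a) (n : ℕ) :
    ∃ p ≤ n, (∀ i, p ≤ i → i ≤ n → a i = a n) ∧ ∀ i < p, a n < a i := by
  classical
  have hex : ∃ p, a p = a n := ⟨n, rfl⟩
  refine ⟨Nat.find hex, Nat.find_min' hex rfl, fun i hp hi => ?_, fun i hi => ?_⟩
  · exact le_antisymm (Nat.find_spec hex ▸ ha hp) (ha hi)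
  · exact lt_of_le_of_ne (ha (by have := Nat.find_min' hex rfl; omega))
      fun h => Nat.find_min hex hi h.symm

lemma exists_pos_forall_lt_le {p : ℕ} {x : ℕ → ℝ} (hx : ∀ i < p, 0 < x i) :
    ∃ ε > 0, ∀ i < p, ε ≤ x i := by
  induction p with
  | zero => exact ⟨1, one_pos, by simp⟩
  | succ p ih =>
    obtain ⟨ε, hε, h⟩ := ih fun i hi => hx i (by omega)
    refine ⟨min ε (x p), lt_min hε (hx p p.lt_succ_self), fun i hi => ?_⟩
    rcases Nat.lt_succ_iff_lt_or_eq.1 hi with hi | rfl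
    · exact (min_le_left _ _).trans (h i hi)
    · exact min_le_right _ _

def hinge (a : ℕ → ℝ) (p n : ℕ) (ε η : ℝ) (i : ℕ) : ℝ :=
  if i < p then 0 else if i ≤ n then -ε else η * a i

section hinge

variable {a : ℕ → ℝ} {p n : ℕ} {ε η : ℝ}

lemma hinge_of_lt {i : ℕ} (h : i < p) : hinge a p n ε η i = 0 := if_pos h

lemma hinge_of_mem {i : ℕ} (hp : p ≤ i) (hn : i ≤ n) : hinge a p n ε η i = -ε := by
  simp [hinge, hp, hn]

lemma hinge_of_gt {i : ℕ} (hp : p ≤ n) (h : n < i) : hinge a p n ε η i = η * a i := by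
  simp [hinge, show ¬i < p by omega, show ¬i ≤ n by omega]

lemma tailSum_hinge_of_gt (hp : p ≤ n) {m : ℕ} (h : n < m) :
    tailSum (hinge a p n ε η) m = η * tailSum a m := by
  rw [← tailSum_const_mul]
  exact tsum_congr fun i => hinge_of_gt hp (by omega)

lemma summable_hinge (ha : Summable a) (hp : p ≤ n) : Summable (hinge a p n ε η) := by
  rw [← summable_nat_add_iff (n + 1)]
  exact ((summable_nat_add_iff (n + 1)).2 ha).mul_left η |>.congr
    fun i => (hinge_of_gt hp (by omega)).symm

lemma tailSum_hinge_of_mem (ha : Summable a) (hp : p ≤ n) {m : ℕ} (hpm : p ≤ m)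
    (hmn : m ≤ n + 1) :
    tailSum (hinge a p n ε η) m = η * tailSum a (n + 1) - (n + 1 - m : ℕ) * ε := by
  rw [tailSum_eq_sum_Ico_add (summable_hinge ha hp) hmn, tailSum_hinge_of_gt hp n.lt_succ_self,
    Finset.sum_congr rfl fun i hi => hinge_of_mem (hpm.trans (Finset.mem_Ico.1 hi).1)
      (Nat.lt_succ_iff.1 (Finset.mem_Ico.1 hi).2), Finset.sum_const, Nat.card_Ico, nsmul_eq_mul]
  ring

lemma tailSum_hinge_of_le (ha : Summable a) (hp : p ≤ n) {m : ℕ} (hmp : m ≤ p) :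
    tailSum (hinge a p n ε η) m = tailSum (hinge a p n ε η) p := by
  rw [tailSum_eq_sum_Ico_add (summable_hinge ha hp) hmp, Finset.sum_eq_zero
    fun i hi => hinge_of_lt (Finset.mem_Ico.1 hi).2, zero_add]

lemma abs_mul_sub_mul_le {η x y : ℝ} (hη0 : 0 ≤ η) (hη1 : η ≤ 1) (hxy : x ≤ y) :
    |η * y - η * x| ≤ y - x := by
  rw [← mul_sub, abs_of_nonneg (mul_nonneg hη0 (sub_nonneg.2 hxy))]
  exact mul_le_of_le_one_left (sub_nonneg.2 hxy) hη1

lemma abs_hinge_sub_succ_le (hpos : ∀ i, 0 < a i) (hanti : Antitone a) (hpn : p ≤ n)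
    (hblock : ∀ i, p ≤ i → i ≤ n → a i = a n) (hbefore : ∀ i < p, ε ≤ a i - a n)
    (hε : 0 < ε) (hη0 : 0 ≤ η) (hη1 : η ≤ 1) (hnext : ε + η * a (n + 1) ≤ a n - a (n + 1))
    (i : ℕ) : |hinge a p n ε η i - hinge a p n ε η (i + 1)| ≤ a i - a (i + 1) := by
  rcases lt_trichotomy (i + 1) p with hip | hip | hpi
  · simpa [hinge_of_lt hip, hinge_of_lt (show i < p by omega)] using hanti i.le_succ
  · rw [hinge_of_lt (show i < p by omega), hinge_of_mem hip.ge (by omega),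
      hblock (i + 1) hip.ge (by omega)]
    simpa [abs_of_pos hε] using hbefore i (by omega)
  rcases lt_trichotomy i n with hin | rfl | hni
  · rw [hinge_of_mem (by omega) hin.le, hinge_of_mem (by omega) hin, hblock i (by omega) hin.le,
      hblock (i + 1) (by omega) hin]
    simp
  · rw [hinge_of_mem (by omega) le_rfl, hinge_of_gt hpn i.lt_succ_self, abs_of_nonpos
      (by nlinarith [mul_nonneg hη0 (hpos (i + 1)).le])]
    linarith
  · rw [hinge_of_gt hpn hni, hinge_of_gt hpn (by omega)]
    exact abs_mul_sub_mul_le hη0 hη1 (hanti i.le_succ)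

lemma abs_tailSum_hinge_sub_le (hpos : ∀ i, 0 < a i) (hsum : Summable a)
    (htail : ∀ i, a i ≤ tailSum a (i + 1)) (hpn : p ≤ n) (hblock : ∀ i, p ≤ i → i ≤ n → a i = a n)
    (hε : 0 < ε) (hη0 : 0 ≤ η) (hη1 : η ≤ 1)
    (hmass : η * tailSum a (n + 1) = (n + 1 - p : ℕ) * ε)
    (hgap : ((n + 1 - p : ℕ) + 1) * ε ≤ tailSum a (n + 1) - a n) (m : ℕ) :
    |tailSum (hinge a p n ε η) (m + 1) - hinge a p n ε η m| ≤ tailSum a (m + 1) - a m := by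
  rcases lt_or_ge m p with hmp | hpm
  · rw [tailSum_hinge_of_le hsum hpn hmp, tailSum_hinge_of_mem hsum hpn le_rfl (by omega), hmass,
      hinge_of_lt hmp, sub_self, sub_zero, abs_zero]
    exact sub_nonneg.2 (htail m)
  rcases le_or_gt m n with hmn | hnm
  · have hr : ((n + 1 - (m + 1) : ℕ) : ℝ) ≤ (n + 1 - p : ℕ) := by exact_mod_cast (by omega)
    have hrε := mul_le_mul_of_nonneg_right hr hε.le
    have hr0 := mul_nonneg (Nat.cast_nonneg (n + 1 - (m + 1))) hε.le
    have hT := tailSum_le_tailSum_of_le hpos hsum (show m + 1 ≤ n + 1 by omega)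
    rw [tailSum_hinge_of_mem hsum hpn (by omega) (by omega), hinge_of_mem hpm hmn, hmass,
      hblock m hpm hmn, abs_le]
    constructor <;> nlinarith
  · rw [tailSum_hinge_of_gt hpn (by omega), hinge_of_gt hpn hnm]
    exact abs_mul_sub_mul_le hη0 hη1 (htail m)

end hinge

lemma isPerturbation_hinge {a : ℕ → ℝ} {p n : ℕ} {ε η : ℝ} (ha : a ∈ K) (hpn : p ≤ n)
    (hblock : ∀ i, p ≤ i → i ≤ n → a i = a n) (hbefore : ∀ i < p, ε ≤ a i - a n)
    (hε : 0 < ε) (hmass : η * tailSum a (n + 1) = (n + 1 - p : ℕ) * ε)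
    (hgap_tail : ((n + 1 - p : ℕ) + 1) * ε ≤ tailSum a (n + 1) - a n)
    (hgap_next : ((n + 1 - p : ℕ) + 1) * ε ≤ a n - a (n + 1)) :
    IsPerturbation a (hinge a p n ε η) := by
  obtain ⟨hpos, hanti, hsum, hle, htail⟩ := ha
  replace htail : ∀ n, a n ≤ tailSum a (n + 1) := htail
  have hT : 0 < tailSum a (n + 1) := tailSum_pos hpos hsum _
  have hmass0 : 0 ≤ η * tailSum a (n + 1) := hmass ▸ mul_nonneg (Nat.cast_nonneg _) hε.le
  have hη0 : 0 ≤ η := nonneg_of_mul_nonneg_left hmass0 hT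
  have hη1 : η < 1 := by
    refine lt_of_mul_lt_mul_right (a := tailSum a (n + 1)) ?_ hT.le
    linarith [hpos n]
  have hnext : a (n + 1) ≤ tailSum a (n + 1) := by
    linarith [tailSum_eq_add_tailSum_succ hsum (n + 1), tailSum_pos hpos hsum (n + 2)]
  refine ⟨summable_hinge hsum hpn, fun i => ?_, ?_, ?_, ?_⟩
  · rcases lt_or_ge i p with hip | hpi
    · simpa [hinge_of_lt hip] using hpos i
    rcases le_or_gt i n with hin | hni
    · rw [hinge_of_mem hpi hin, abs_neg, abs_of_pos hε, hblock i hpi hin]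
      nlinarith [hpos (n + 1)]
    · rw [hinge_of_gt hpn hni, abs_of_nonneg (mul_nonneg hη0 (hpos i).le)]
      exact mul_lt_of_lt_one_left (hpos i) hη1
  · have := mul_le_mul_of_nonneg_left hnext hη0
    exact abs_hinge_sub_succ_le hpos hanti hpn hblock hbefore hε hη0 hη1.le (by linarith)
  · rw [← tailSum_zero, tailSum_hinge_of_le hsum hpn p.zero_le,
      tailSum_hinge_of_mem hsum hpn le_rfl (by omega), hmass, sub_self, abs_zero]
    linarith
  · exact abs_tailSum_hinge_sub_le hpos hsum htail hpn hblock hε hη0 hη1.le hmass hgap_tail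

theorem IsExtremePt.eq_succ_or_eq_tailSum {a : ℕ → ℝ} (hext : IsExtremePt K a) (n : ℕ) :
    a n = a (n + 1) ∨ a n = tailSum a (n + 1) := by
  obtain ⟨hpos, hanti, hsum, -, htail⟩ := hext.1
  by_contra! h
  have hnext : 0 < a n - a (n + 1) := sub_pos.2 (lt_of_le_of_ne (hanti n.le_succ) h.1.symm)
  have hslack : 0 < tailSum a (n + 1) - a n := sub_pos.2 (lt_of_le_of_ne (htail n) h.2)
  obtain ⟨p, hpn, hblock, hbefore⟩ := hanti.exists_block_start n
  obtain ⟨ε₀, hε₀, hε₀_le⟩ := exists_pos_forall_lt_le fun i hi => sub_pos.2 (hbefore i hi)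
  set L : ℝ := ((n + 1 - p : ℕ) : ℝ)
  set gap := min (tailSum a (n + 1) - a n) (a n - a (n + 1))
  set ε := min ε₀ (gap / (L + 1))
  have hL : 0 < L + 1 := by positivity
  have hε : 0 < ε := lt_min hε₀ (div_pos (lt_min hslack hnext) hL)
  have hgap : (L + 1) * ε ≤ gap := by
    rw [mul_comm, ← le_div_iff₀ hL]
    exact min_le_right _ _
  -- `η` makes the perturbation have total mass zero
  have hv := isPerturbation_hinge (η := L * ε / tailSum a (n + 1)) hext.1 hpn hblock
    (fun i hi => (min_le_left _ _).trans (hε₀_le i hi)) hε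
    (div_mul_cancel₀ _ (tailSum_pos hpos hsum _).ne')
    (hgap.trans (min_le_left _ _)) (hgap.trans (min_le_right _ _))
  have hp := congr_fun (hext.eq_zero_of_isPerturbation hv) p
  rw [hinge_of_mem le_rfl hpn, Pi.zero_apply, neg_eq_zero] at hp
  exact hε.ne' hp

lemma Summable.exists_ge_succ_lt_of_pos {a : ℕ → ℝ} (hsum : Summable a) (hpos : ∀ n, 0 < a n)
    (p : ℕ) : ∃ q ≥ p, a (q + 1) < a q := by
  by_contra! h
  have hge : ∀ q ≥ p, a p ≤ a q := fun q hq =>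
    Nat.le_induction le_rfl (fun q hpq ih => ih.trans (h q hpq)) q hq
  obtain ⟨q, hq, hpq⟩ := ((hsum.tendsto_atTop_zero.eventually (gt_mem_nhds (hpos p))).and
    (Filter.eventually_ge_atTop p)).exists
  linarith [hge q hpq]

theorem IsExtremePt.exists_block {a : ℕ → ℝ} (hext : IsExtremePt K a) (p : ℕ) :
    ∃ q, p ≤ q ∧ (∀ j, p ≤ j → j ≤ q → a j = a q) ∧ a q = tailSum a (q + 1) := by
  classical
  obtain ⟨hpos, -, hsum, -, -⟩ := hext.1
  have hex : ∃ q, p ≤ q ∧ a q = tailSum a (q + 1) := by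
    obtain ⟨q, hpq, hq⟩ := hsum.exists_ge_succ_lt_of_pos hpos p
    exact ⟨q, hpq, (hext.eq_succ_or_eq_tailSum q).resolve_left hq.ne'⟩
  have hstep : ∀ j, p ≤ j → j < Nat.find hex → a j = a (j + 1) := fun j hpj hj =>
    (hext.eq_succ_or_eq_tailSum j).resolve_right fun h => Nat.find_min hex hj ⟨hpj, h⟩
  refine ⟨Nat.find hex, (Nat.find_spec hex).1, fun j hpj hjq => ?_, (Nat.find_spec hex).2⟩
  revert hpj
  induction hjq using Nat.decreasingInduction with
  | self => exact fun _ => rfl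
  | of_succ j hj ih => exact fun hpj => (hstep j hpj hj).trans (ih (by omega))

lemma tailSum_eq_of_block {a : ℕ → ℝ} (hsum : Summable a) {p q : ℕ} (hpq : p ≤ q)
    (hconst : ∀ j, p ≤ j → j ≤ q → a j = a q) (htight : a q = tailSum a (q + 1)) :
    tailSum a p = (q + 2 - p : ℕ) * a q := by
  rw [tailSum_eq_sum_Ico_add hsum (show p ≤ q + 1 by omega), ← htight,
    Finset.sum_congr rfl fun j hj => hconst j (Finset.mem_Ico.1 hj).1
      (Nat.lt_succ_iff.1 (Finset.mem_Ico.1 hj).2),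
    Finset.sum_const, Nat.card_Ico, nsmul_eq_mul, show q + 2 - p = q + 1 - p + 1 by omega]
  push_cast
  ring

section blocks

variable (q : ℕ → ℕ)

/-- Start of the `m`-th block, when the block starting at `p` ends at `q p`. -/
def blockStart : ℕ → ℕ
  | 0 => 0
  | m + 1 => q (blockStart m) + 1

/-- The `m`-th block has `blockRatio q m - 1` entries; along it the tail sum drops by this
factor. -/
def blockRatio (m : ℕ) : ℕ := q (blockStart q m) + 2 - blockStart q m

variable {q}

lemma two_le_blockRatio (hq : ∀ p, p ≤ q p) (m : ℕ) : 2 ≤ blockRatio q m := by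
  have := hq (blockStart q m)
  unfold blockRatio
  omega

lemma sum_blockRatio_sub_one (hq : ∀ p, p ≤ q p) (m : ℕ) :
    ∑ i ∈ Finset.range m, (blockRatio q i - 1) = blockStart q m := by
  induction m with
  | zero => rfl
  | succ m ih =>
    have := hq (blockStart q m)
    rw [Finset.sum_range_succ, ih, blockRatio, blockStart]
    omega

lemma tailSum_blockStart {a : ℕ → ℝ} (hsum : Summable a) (hone : tailSum a 0 = 1)
    (hq : ∀ p, p ≤ q p ∧ (∀ j, p ≤ j → j ≤ q p → a j = a (q p)) ∧ a (q p) = tailSum a (q p + 1))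
    (m : ℕ) : tailSum a (blockStart q m) = (∏ i ∈ Finset.range m, (blockRatio q i : ℝ))⁻¹ := by
  induction m with
  | zero => simpa [blockStart] using hone
  | succ m ih =>
    obtain ⟨hle, hconst, htight⟩ := hq (blockStart q m)
    have hblock := tailSum_eq_of_block hsum hle hconst htight
    have hk : (blockRatio q m : ℝ) ≠ 0 := by
      have := two_le_blockRatio (fun p => (hq p).1) m
      positivity
    rw [blockStart, ← htight, Finset.prod_range_succ, mul_inv, ← ih, hblock]
    field_simp
    rfl

end blocks

/-- Every extreme point of `K` is obtained, for some integers `k_m ≥ 2`, by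
concatenating for `m = 0, 1, 2, …` a block of `k_m − 1` entries each equal to
`1/(k_0 ⋯ k_m)` (0-indexed). -/
theorem stmt14 (a : ℕ → ℝ) (hext : IsExtremePt K a) :
    ∃ k : ℕ → ℕ, (∀ n, 2 ≤ k n) ∧
      ∀ m j : ℕ, (∑ i ∈ Finset.range m, (k i - 1)) ≤ j →
        j < ∑ i ∈ Finset.range (m + 1), (k i - 1) →
        a j = 1 / ∏ i ∈ Finset.range (m + 1), (k i : ℝ) := by
  choose q hq using hext.exists_block
  have hle : ∀ p, p ≤ q p := fun p => (hq p).1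
  refine ⟨blockRatio q, two_le_blockRatio hle, fun m j hj hj' => ?_⟩
  rw [sum_blockRatio_sub_one hle] at hj hj'
  have hone : tailSum a 0 = 1 := tailSum_zero.trans hext.tsum_eq_one
  rw [(hq _).2.1 j hj (by rw [blockStart] at hj'; omega), (hq _).2.2, one_div,
    ← tailSum_blockStart hext.1.2.2.1 hone hq]
  rfl
end
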